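/- Let {θ_t} have kernels k_t satisfying the size condition |k_t(x,y)| ≤ C t^α/(t+|x−y|)^{α+d} and the smoothness condition |k_t(x,y)−k_t(x',y')| ≤ C(|x−x'|^α+|y−y'|^α)/(t+|x−y|)^{α+d} when |x−x'|+|y−y'| < t. Let P be a dyadic cube with center x_P, let R be a dyadic cube with ℓ(P) < ℓ(R), and let φ be supported on P with ∫φ = 0. Then for all (x,t) with x ∈ R and t ∈ [ℓR/2, ℓR): |θ_t φ(x)| ≲ (√(ℓR·ℓP))^α / D(R,P)^{α+d} · ‖φ‖_{L¹}, where D(R,P) = ℓR + d(R,P) + ℓP. -/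

import Mathlib

open MeasureTheory ENNReal Set

structure DyadicCube (d : ℕ) where
  j : ℤ
  m : Fin d → ℤ

namespace DyadicCube

variable {d : ℕ}

/-- side length `2^{-j}` of the dyadic cube. -/
noncomputable def side (Q : DyadicCube d) : ℝ := 2 ^ (-Q.j)

/-- the dyadic cube `2^{-j}([0,1)^d + m)` as a subset of `ℝ^d`. -/
def toSet (Q : DyadicCube d) : Set (Fin d → ℝ) :=
  {x | ∀ i, (Q.m i : ℝ) * 2 ^ (-Q.j) ≤ x i ∧ x i < ((Q.m i : ℝ) + 1) * 2 ^ (-Q.j)}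

/-- the concentric triple `3Q`. -/
def triple (Q : DyadicCube d) : Set (Fin d → ℝ) :=
  {x | ∀ i, ((Q.m i : ℝ) - 1) * 2 ^ (-Q.j) ≤ x i ∧ x i < ((Q.m i : ℝ) + 2) * 2 ^ (-Q.j)}

/-- the centre of the cube. -/
noncomputable def center (Q : DyadicCube d) : Fin d → ℝ :=
  fun i => ((Q.m i : ℝ) + 1 / 2) * 2 ^ (-Q.j)

/-- the `k`-fold dyadic ancestor `Q^{(k)}`. -/
def ancestor (k : ℕ) (Q : DyadicCube d) : DyadicCube d :=
  ⟨Q.j - k, fun i => Int.fdiv (Q.m i) (2 ^ k)⟩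

/-- the `k`-grandchildren `ch_k(Q)`. -/
def children (k : ℕ) (Q : DyadicCube d) : Set (DyadicCube d) :=
  {P | P.j = Q.j + k ∧ P.toSet ⊆ Q.toSet}

/-- distance between two sets in the `ℓ^∞` metric of `ℝ^d`. -/
noncomputable def sdist (A B : Set (Fin d → ℝ)) : ℝ :=
  (⨅ a ∈ A, EMetric.infEdist a B).toReal

/-- average `⟨f⟩_A` of `f` over `A`. -/
noncomputable def avg (f : (Fin d → ℝ) → ℝ) (A : Set (Fin d → ℝ)) : ℝ :=
  (volume A).toReal⁻¹ * ∫ x in A, f x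

/-- average `⟨|f|⟩_A`. -/
noncomputable def avgAbs (f : (Fin d → ℝ) → ℝ) (A : Set (Fin d → ℝ)) : ℝ :=
  avg (fun x => |f x|) A

/-- `Q` is `r`-good with parameter `γ`. -/
def IsGood (r : ℕ) (γ : ℝ) (Q : DyadicCube d) : Prop :=
  ∀ P : DyadicCube d, 2 ^ r * Q.side ≤ P.side →
    Q.side ^ γ * P.side ^ (1 - γ) < sdist Q.toSet (frontier P.toSet)

/-- martingale (Haar) difference `Δ_Q f`. -/
noncomputable def mdiff (f : (Fin d → ℝ) → ℝ) (Q : DyadicCube d) (x : Fin d → ℝ) : ℝ :=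
  ∑' J : {J : DyadicCube d // J ∈ children 1 Q},
    Set.indicator J.1.toSet (fun _ => avg f J.1.toSet - avg f Q.toSet) x

/-- `Σ_ε ⟨f, h_Q^ε⟩² = ‖Δ_Q f‖_{L²}²`, the total squared Haar coefficient on `Q`. -/
noncomputable def haarSq (f : (Fin d → ℝ) → ℝ) (P : DyadicCube d) : ℝ :=
  ∫ x in P.toSet, (mdiff f P x) ^ 2

end DyadicCube

open DyadicCube

/-! Since `φ` has zero mean, `θ_t φ(x) = ∫ (k_t(x,y) - k_t(x,x_P)) φ(y) dy`. For `y ∈ P` we have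
`|y - x_P| ≤ ℓP/2 < t`, so the smoothness condition bounds the bracket by
`C |y - x_P|^α / (t + |x - y|)^{α+d}`; here `|y - x_P|^α ≤ (√(ℓR ℓP))^α` because `ℓP < ℓR`, and
`t + |x - y| ≥ D(R,P)/4` because `t ≥ ℓR/2 > ℓP/2` and `|x - y| ≥ d(R,P)`. -/

section ZeroMean

variable {X : Type*} [MeasurableSpace X] {μ : Measure X} {φ g : X → ℝ}

theorem integral_mul_eq_integral_sub_const_mul (hφ : Integrable φ μ) (hφ0 : ∫ y, φ y ∂μ = 0)
    (c : ℝ) : ∫ y, g y * φ y ∂μ = ∫ y, (g y - c) * φ y ∂μ := by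
  have hcφ : Integrable (fun y => c * φ y) μ := hφ.const_mul c
  have hsplit : (fun y => (g y - c) * φ y) = fun y => g y * φ y - c * φ y := by
    ext y; ring
  by_cases hgφ : Integrable (fun y => g y * φ y) μ
  · rw [hsplit, integral_sub hgφ hcφ, integral_const_mul, hφ0, mul_zero, sub_zero]
  · have hgφ' : ¬Integrable (fun y => (g y - c) * φ y) μ := by
      rw [hsplit]
      exact fun h => hgφ ((h.add hcφ).congr (ae_of_all _ fun y => by simp))
    rw [integral_undef hgφ, integral_undef hgφ']

theorem abs_integral_mul_le_of_abs_le_on_support (hφ : Integrable φ μ) {M : ℝ}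
    (hg : ∀ y, φ y ≠ 0 → |g y| ≤ M) : |∫ y, g y * φ y ∂μ| ≤ M * ∫ y, |φ y| ∂μ := by
  rw [← integral_const_mul]
  refine norm_integral_le_of_norm_le (f := fun y => g y * φ y) (hφ.abs.const_mul M)
    (ae_of_all _ fun y => ?_)
  rw [Real.norm_eq_abs, abs_mul]
  rcases eq_or_ne (φ y) 0 with h | h
  · simp [h]
  · exact mul_le_mul_of_nonneg_right (hg y h) (abs_nonneg _)

theorem abs_integral_mul_le_of_integral_eq_zero (hφ : Integrable φ μ) (hφ0 : ∫ y, φ y ∂μ = 0)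
    {c M : ℝ} (hg : ∀ y, φ y ≠ 0 → |g y - c| ≤ M) :
    |∫ y, g y * φ y ∂μ| ≤ M * ∫ y, |φ y| ∂μ :=
  integral_mul_eq_integral_sub_const_mul hφ hφ0 c ▸ abs_integral_mul_le_of_abs_le_on_support hφ hg

end ZeroMean

namespace DyadicCube

variable {d : ℕ}

theorem side_pos (Q : DyadicCube d) : 0 < Q.side :=
  zpow_pos two_pos _

theorem dist_center_le {Q : DyadicCube d} {y : Fin d → ℝ} (hy : y ∈ Q.toSet) :
    dist y Q.center ≤ Q.side / 2 := by
  refine (dist_pi_le_iff (half_pos Q.side_pos).le).2 fun i => ?_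
  obtain ⟨hlo, hhi⟩ := hy i
  rw [Real.dist_eq, abs_le, center, side]
  constructor <;> linarith

theorem sdist_le_dist {A B : Set (Fin d → ℝ)} {x y : Fin d → ℝ} (hx : x ∈ A) (hy : y ∈ B) :
    sdist A B ≤ dist x y := by
  rw [dist_edist]
  exact ENNReal.toReal_mono (edist_ne_top x y)
    ((biInf_le _ hx).trans (Metric.infEDist_le_edist_of_mem hy))

theorem sdist_nonneg (A B : Set (Fin d → ℝ)) : 0 ≤ sdist A B :=
  ENNReal.toReal_nonneg

theorem side_add_sdist_add_side_le {P R : DyadicCube d} {x y : Fin d → ℝ} {t : ℝ}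
    (hPR : P.side < R.side) (hx : x ∈ R.toSet) (hy : y ∈ P.toSet) (ht : R.side / 2 ≤ t) :
    R.side + sdist R.toSet P.toSet + P.side ≤ 4 * (t + dist x y) := by
  linarith [sdist_le_dist hx hy, dist_nonneg (x := x) (y := y)]

theorem abs_kernel_sub_center_le {α C : ℝ} (hα : 0 < α) (hC : 0 ≤ C)
    {k : ℝ → (Fin d → ℝ) → (Fin d → ℝ) → ℝ}
    (hsmooth : ∀ t x x' y y', 0 < t → dist x x' + dist y y' < t →
        |k t x y - k t x' y'| ≤
          C * (dist x x' ^ α + dist y y' ^ α) / (t + dist x y) ^ (α + (d : ℝ)))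
    {P R : DyadicCube d} (hPR : P.side < R.side) {x y : Fin d → ℝ} (hx : x ∈ R.toSet)
    (hy : y ∈ P.toSet) {t : ℝ} (ht : R.side / 2 ≤ t) :
    |k t x y - k t x P.center| ≤
      C * 4 ^ (α + (d : ℝ)) * Real.sqrt (R.side * P.side) ^ α /
        (R.side + sdist R.toSet P.toSet + P.side) ^ (α + (d : ℝ)) := by
  set D := R.side + sdist R.toSet P.toSet + P.side
  set S := Real.sqrt (R.side * P.side)
  have hP := P.side_pos
  have hyc : dist y P.center ≤ P.side / 2 := dist_center_le hy
  have hPS : P.side ≤ S := (Real.le_sqrt hP.le (mul_pos R.side_pos hP).le).2 (by nlinarith)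
  have hD : D / 4 ≤ t + dist x y := by linarith [side_add_sdist_add_side_le hPR hx hy ht]
  have hDpos : 0 < D := by linarith [sdist_nonneg R.toSet P.toSet, R.side_pos]
  have hk := hsmooth t x x y P.center (by linarith) (by rw [dist_self]; linarith)
  rw [dist_self, Real.zero_rpow hα.ne', zero_add] at hk
  calc |k t x y - k t x P.center|
      ≤ C * dist y P.center ^ α / (t + dist x y) ^ (α + (d : ℝ)) := hk
    _ ≤ C * S ^ α / (D / 4) ^ (α + (d : ℝ)) := by gcongr; linarith
    _ = C * 4 ^ (α + (d : ℝ)) * S ^ α / D ^ (α + (d : ℝ)) := by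
      rw [Real.div_rpow hDpos.le (by norm_num)]
      field_simp

end DyadicCube

/-- Kernel estimate for small `P` (case `ℓP < ℓR` of Lemma `LM`): if the kernels `k_t` satisfy
the size and smoothness conditions with constant `C` and exponent `α ∈ (0,1]`, `φ` is supported
on `P` with zero mean, then for `x ∈ R` and `t ∈ [ℓR/2, ℓR)`,
`|θ_t φ(x)| ≤ C' (√(ℓR ℓP))^α / D(R,P)^{α+d} ‖φ‖_{L¹}` with `C' = C'(C, α, d)`. -/
theorem theta_on_small_cube {d : ℕ} {α : ℝ} (hα : α ∈ Set.Ioc (0 : ℝ) 1)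
    {C : ℝ} (hC : 0 < C) :
    ∃ C' > 0, ∀ (k : ℝ → (Fin d → ℝ) → (Fin d → ℝ) → ℝ),
      (∀ t x y, 0 < t → |k t x y| ≤ C * t ^ α / (t + dist x y) ^ (α + (d : ℝ))) →
      (∀ t x x' y y', 0 < t → dist x x' + dist y y' < t →
        |k t x y - k t x' y'| ≤
          C * (dist x x' ^ α + dist y y' ^ α) / (t + dist x y) ^ (α + (d : ℝ))) →
      ∀ (P R : DyadicCube d), P.side < R.side →
      ∀ φ : (Fin d → ℝ) → ℝ, Integrable φ → Function.support φ ⊆ P.toSet →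
        (∫ y, φ y) = 0 →
      ∀ x ∈ R.toSet, ∀ t ∈ Set.Ico (R.side / 2) R.side,
        |∫ y, k t x y * φ y| ≤
          C' * Real.sqrt (R.side * P.side) ^ α /
            (R.side + sdist R.toSet P.toSet + P.side) ^ (α + (d : ℝ)) * ∫ y, |φ y| := by
  refine ⟨C * 4 ^ (α + (d : ℝ)), by positivity, ?_⟩
  intro k _ hsmooth P R hPR φ hφ hsupp hφ0 x hx t ht
  exact abs_integral_mul_le_of_integral_eq_zero hφ hφ0 fun y hy =>
    abs_kernel_sub_center_le hα.1 hC.le hsmooth hPR hx (hsupp hy) ht.1
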